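/- arXiv:1603.09284 — 7 statements merged into one kernel-verified Lean document; each statement's English description precedes it below -/
import Mathlib

section
/- Let $A$ be a commutative ring of prime characteristic $p$, $M$ a finite abelian $p$-group of order $q = |M|$, and $A = \bigoplus_{m \in M} A_m$ an $M$-grading of $A$. Then for every $x \in A$, the $q$-th power $x^q$ lies in the degree-zero component $A_0$. -/
/-- if `A` is a commutative ring of prime characteristic `p`, graded by a
finite abelian `p`-group `M` of order `q = |M|`, then `x ^ q` lies in the degree-zero
component for every `x : A`. -/
theorem stmt2 {A : Type*} [CommRing A] {p : ℕ} [Fact p.Prime] [CharP A p]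
    {M : Type*} [AddCommGroup M] [DecidableEq M] [Fintype M]
    (𝒜 : M → AddSubgroup A) [GradedRing 𝒜]
    (k : ℕ) (hcard : Fintype.card M = p ^ k) :
    ∀ x : A, x ^ Fintype.card M ∈ 𝒜 0 := by
  classical
  intro x
  have hx : x = ∑ m : M, (DirectSum.decompose 𝒜 x m : A) :=
    (DirectSum.sum_support_decompose 𝒜 x).symm.trans <|
      Finset.sum_subset (Finset.subset_univ _) fun m _ hm => by
        rw [DFinsupp.notMem_support_iff.mp hm]; rfl
  rw [hx, hcard, sum_pow_char_pow]
  apply AddSubgroup.sum_mem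
  intro m _
  have h1 : (DirectSum.decompose 𝒜 x m : A) ^ p ^ k ∈ 𝒜 (p ^ k • m) :=
    SetLike.pow_mem_graded _ (SetLike.coe_mem _)
  have h2 : p ^ k • m = 0 := by rw [← hcard]; exact card_nsmul_eq_zero
  rwa [h2] at h1
end

section
/- Let $A$ be a discrete valuation ring with valuation $v$, $M$ a finite abelian $p$-group where $p$ is the residue characteristic, and $A = \bigoplus_{m \in M} A_0 e_m$ an $M$-grading of $A$ with $A_0$ the degree-zero part, each graded piece free of rank one over $A_0$ generated by $e_m$ ($e_0 = 1$), and structure constants $\alpha_{m,n}$ all non-zero-divisors. Assume $e_n \in A^\times$ only for $n = 0$. Then the valuations $v(e_m)$, $m \in M$, are pairwise distinct. -/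
/-!
If `v (e m) = v (e n)`, then `e m = e n * u` for a unit `u`. Multiplication by `e n` moves the
`j`-th coordinate of `u` to position `j + n`, scaled by the non-zero-divisor `α j n`, so every
coordinate of `u` other than the one at `m - n` vanishes. Hence `u` is a multiple of `e (m - n)`,
which is therefore a unit, and `m = n`.
-/

namespace Module.Basis

variable {A₀ A M : Type*} [CommRing A₀] [CommRing A] [Algebra A₀ A]

theorem repr_mul_apply_add [Add M] [IsRightCancelAdd M] (b : Basis M A₀ A) (α : M → M → A₀)
    (hmul : ∀ m n, b m * b n = algebraMap A₀ A (α m n) * b (m + n)) (n j : M) (x : A) :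
    b.repr (b n * x) (j + n) = α j n * b.repr x j := by
  let mulLeft : A →ₗ[A₀] A₀ := (b.coord (j + n)).comp (LinearMap.mulLeft A₀ (b n))
  let scaled : A →ₗ[A₀] A₀ := α j n • b.coord j
  suffices mulLeft = scaled from LinearMap.congr_fun this x
  refine b.ext fun k => ?_
  by_cases hk : k = j <;> simp [mulLeft, scaled, mul_comm (b n), hmul, ← Algebra.smul_def, hk]

theorem isUnit_sub_of_associated [AddCommGroup M] (b : Basis M A₀ A) (α : M → M → A₀)
    (hmul : ∀ m n, b m * b n = algebraMap A₀ A (α m n) * b (m + n))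
    (hreg : ∀ m n, α m n ∈ nonZeroDivisors A₀) {m n : M} (h : Associated (b n) (b m)) :
    IsUnit (b (m - n)) := by
  obtain ⟨u, hu⟩ := h
  have hvanish : ∀ j, j ≠ m - n → b.repr u j = 0 := by
    intro j hj
    have hjn : j + n ≠ m := fun h => hj (eq_sub_of_add_eq h)
    rw [← mul_left_mem_nonZeroDivisors_eq_zero_iff (hreg j n), ← b.repr_mul_apply_add α hmul,
      hu, b.repr_self, Finsupp.single_eq_of_ne hjn]
  have hsingle : b.repr u = Finsupp.single (m - n) (b.repr u (m - n)) := by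
    ext j
    by_cases hj : j = m - n
    · rw [hj, Finsupp.single_eq_same]
    · rw [hvanish j hj, Finsupp.single_eq_of_ne hj]
  have hu' : (u : A) = algebraMap A₀ A (b.repr u (m - n)) * b (m - n) := by
    rw [← Algebra.smul_def, ← b.repr_symm_single, ← hsingle, b.repr.symm_apply_apply]
  exact isUnit_of_mul_isUnit_right (hu' ▸ u.isUnit)

end Module.Basis

theorem stmt3_general {A₀ A : Type*} [CommRing A₀] [CommRing A] [IsDomain A]
    [IsDiscreteValuationRing A] [Algebra A₀ A]
    {M : Type*} [AddCommGroup M]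
    (e : M → A) (α : M → M → A₀)
    (b : Module.Basis M A₀ A) (hb : ∀ m, b m = e m)
    (hmul : ∀ m n, e m * e n = algebraMap A₀ A (α m n) * e (m + n))
    (hreg : ∀ m n, α m n ∈ nonZeroDivisors A₀)
    (hN : ∀ n, IsUnit (e n) → n = 0) :
    Function.Injective fun m => IsDiscreteValuationRing.addVal A (e m) := by
  obtain rfl : ⇑b = e := funext hb
  intro m n hmn
  have hassoc : Associated (b n) (b m) :=
    (IsDiscreteValuationRing.addVal_eq_iff_associated _ _).mp hmn.symm
  exact sub_eq_zero.mp (hN _ (b.isUnit_sub_of_associated α hmul hreg hassoc))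

/-- for a totally ramified `M`-graded DVR (`M` a finite abelian `p`-group,
`p` the residue characteristic, graded pieces `A₀ eₘ`, non-zero-divisor structure
constants, and `eₙ` a unit only for `n = 0`), the valuations `v (eₘ)` are pairwise
distinct. -/
theorem stmt3 {A₀ A : Type*} [CommRing A₀] [CommRing A] [IsDomain A]
    [IsDiscreteValuationRing A] [Algebra A₀ A]
    {M : Type*} [AddCommGroup M] [Fintype M]
    {p k : ℕ} [Fact p.Prime] [CharP (IsLocalRing.ResidueField A) p]
    (hcard : Fintype.card M = p ^ k)
    (e : M → A) (α : M → M → A₀)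
    (b : Module.Basis M A₀ A) (hb : ∀ m, b m = e m) (he0 : e 0 = 1)
    (hmul : ∀ m n, e m * e n = algebraMap A₀ A (α m n) * e (m + n))
    (hreg : ∀ m n, α m n ∈ nonZeroDivisors A₀)
    (hN : ∀ n, IsUnit (e n) → n = 0) :
    Function.Injective fun m => IsDiscreteValuationRing.addVal A (e m) :=
  stmt3_general e α b hb hmul hreg hN
end

section
/- With the hypotheses of the totally ramified case ($A$ a DVR of characteristic $p$, $M$-graded with $N = \{0\}$, $d \in M$ with $v(e_d) = 1$): the element $d$ generates $M$ as an abelian group, and for every $m \in M$ one has $m = v(e_m) \cdot d$ and $e_m = u \, e_d^{v(e_m)}$ for some unit $u \in A_0^\times$. In particular $e_d$ generates $A$ as an $A_0$-algebra. -/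
/-!
Since `v (e_d) = 1`, `e_d` is a uniformizer, so every `e_m` is `x * e_d ^ j` with `x ∈ Aˣ`.
Multiplying by `e_d ^ j` moves the coordinate of index `n` (in the basis `e`) to index `n + j • d`,
scaled by a non-zero-divisor of `A₀`; hence `x` has a single non-zero coordinate, at `m - j • d`.
So `x = c • e (m - j • d)`, which makes `e (m - j • d)` a unit, i.e. `m = j • d`, and then
`x = c ∈ A₀` with `c` a unit of `A₀`.
-/

open IsDiscreteValuationRing

namespace Module.Basis

variable {ι R S : Type*} [CommRing R] [CommRing S] [Algebra R S]

theorem eq_repr_smul_of_repr_eq_zero (b : Basis ι R S) {x : S} {i : ι}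
    (hx : ∀ n, n ≠ i → b.repr x n = 0) : x = b.repr x i • b i := by
  classical
  refine b.repr.injective (Finsupp.ext fun n => ?_)
  rw [map_smul, b.repr_self, Finsupp.smul_apply, Finsupp.single_apply]
  by_cases hn : i = n
  · rw [if_pos hn, hn, smul_eq_mul, mul_one]
  · rw [if_neg hn, smul_zero, hx n (Ne.symm hn)]

theorem isUnit_of_isUnit_algebraMap (b : Basis ι R S) {i : ι} (hi : b i = 1) {c : R}
    (hc : IsUnit (algebraMap R S c)) : IsUnit c := by
  refine IsUnit.of_mul_eq_one (b.repr (hc.unit⁻¹ : Sˣ) i) ?_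
  rw [← smul_eq_mul, ← Finsupp.smul_apply, ← map_smul, Algebra.smul_def, hc.mul_val_inv, ← hi,
    b.repr_self, Finsupp.single_eq_same]

end Module.Basis

section GradedBasis

variable {A₀ A M : Type*} [CommRing A₀] [CommRing A] [Algebra A₀ A] [AddCommGroup M]
  {e : M → A} {α : M → M → A₀} (b : Module.Basis M A₀ A) (hb : ∀ m, b m = e m)
  (hmul : ∀ m n, e m * e n = algebraMap A₀ A (α m n) * e (m + n))
include hb hmul

theorem repr_mul_apply_add (y : A) (n a : M) :
    b.repr (y * e a) (n + a) = α n a * b.repr y n := by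
  classical
  suffices (Finsupp.lapply (n + a) ∘ₗ b.repr.toLinearMap ∘ₗ LinearMap.mulRight A₀ (e a)) =
      α n a • (Finsupp.lapply n ∘ₗ b.repr.toLinearMap) from LinearMap.congr_fun this y
  refine b.ext fun k => ?_
  simp only [LinearMap.comp_apply, LinearMap.smul_apply, LinearMap.mulRight_apply,
    LinearEquiv.coe_coe, Finsupp.lapply_apply]
  rw [hb, hmul, ← Algebra.smul_def, ← hb, ← hb, map_smul, b.repr_self, b.repr_self]
  simp only [Finsupp.smul_apply, Finsupp.single_apply, add_left_inj, smul_eq_mul]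
  by_cases hk : k = n
  · rw [hk]
  · simp only [if_neg hk, mul_zero]

theorem repr_eq_zero_of_repr_mul_pow_eq_zero (hreg : ∀ m n, α m n ∈ nonZeroDivisors A₀)
    (d : M) (y : A) (n : M) (j : ℕ) (h : b.repr (y * e d ^ j) (n + j • d) = 0) :
    b.repr y n = 0 := by
  induction j with
  | zero => simpa using h
  | succ j ih =>
    rw [pow_succ, ← mul_assoc, succ_nsmul, ← add_assoc,
      repr_mul_apply_add b hb hmul] at h
    exact ih ((mem_nonZeroDivisors_iff.mp (hreg _ _)).2 _ (by rwa [mul_comm]))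

theorem exists_eq_algebraMap_mul_pow_of_irreducible [IsDomain A] [IsDiscreteValuationRing A]
    (he0 : e 0 = 1) (hreg : ∀ m n, α m n ∈ nonZeroDivisors A₀)
    (hN : ∀ n, IsUnit (e n) → n = 0) {d : M} (hd : Irreducible (e d)) (m : M) :
    ∃ (j : ℕ) (u : A₀ˣ), addVal A (e m) = j ∧ m = j • d ∧ e m = algebraMap A₀ A u * e d ^ j := by
  classical
  have : Nontrivial A₀ := (algebraMap A₀ A).domain_nontrivial
  obtain ⟨j, x, hx⟩ := eq_unit_mul_pow_irreducible (hb m ▸ b.ne_zero m) hd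
  set k := m - j • d
  have hsupp : ∀ n, n ≠ k → b.repr x n = 0 := fun n hn =>
    repr_eq_zero_of_repr_mul_pow_eq_zero b hb hmul hreg d x n j <| by
      rw [← hx, ← hb, b.repr_self, Finsupp.single_apply,
        if_neg fun h => hn (eq_sub_of_add_eq h.symm)]
  have hxk : (x : A) = algebraMap A₀ A (b.repr x k) * e k := by
    rw [← Algebra.smul_def, ← hb]
    exact b.eq_repr_smul_of_repr_eq_zero hsupp
  have hk : k = 0 := hN k (isUnit_of_dvd_unit (Dvd.intro_left _ hxk.symm) x.isUnit)
  have hxc : (x : A) = algebraMap A₀ A (b.repr x 0) := hxk.trans (by rw [hk, he0, mul_one])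
  have hc : IsUnit (b.repr x 0) := b.isUnit_of_isUnit_algebraMap (hb 0 ▸ he0) (hxc ▸ x.isUnit)
  exact ⟨j, hc.unit, addVal_def _ x hd j hx, sub_eq_zero.mp hk,
    by rw [hc.unit_spec, ← hxc, hx]⟩

end GradedBasis

theorem stmt5_general {A₀ A : Type*} [CommRing A₀] [CommRing A] [IsDomain A]
    [IsDiscreteValuationRing A] [Algebra A₀ A]
    {M : Type*} [AddCommGroup M]
    (e : M → A) (α : M → M → A₀)
    (b : Module.Basis M A₀ A) (hb : ∀ m, b m = e m) (he0 : e 0 = 1)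
    (hmul : ∀ m n, e m * e n = algebraMap A₀ A (α m n) * e (m + n))
    (hreg : ∀ m n, α m n ∈ nonZeroDivisors A₀)
    (hN : ∀ n, IsUnit (e n) → n = 0)
    (d : M) (hd : IsDiscreteValuationRing.addVal A (e d) = 1) :
    AddSubgroup.zmultiples d = ⊤ ∧
      (∀ m, ∃ (j : ℕ) (u : A₀ˣ),
        IsDiscreteValuationRing.addVal A (e m) = j ∧ m = j • d ∧
          e m = algebraMap A₀ A u * e d ^ j) ∧
      Algebra.adjoin A₀ {e d} = ⊤ := by
  obtain ⟨ϖ, hϖ⟩ := exists_irreducible A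
  have hirr : Irreducible (e d) :=
    ((addVal_eq_iff_associated _ _).1 (hd.trans (addVal_uniformizer hϖ).symm)).symm.irreducible hϖ
  have key := exists_eq_algebraMap_mul_pow_of_irreducible b hb hmul he0 hreg hN hirr
  refine ⟨eq_top_iff.2 fun m _ => ?_, key, ?_⟩
  · obtain ⟨j, -, -, hm, -⟩ := key m
    exact AddSubgroup.mem_zmultiples_iff.2 ⟨j, by rw [natCast_zsmul, hm]⟩
  · rw [← Algebra.toSubmodule_eq_top, eq_top_iff, ← b.span_eq, Submodule.span_le]
    rintro _ ⟨m, rfl⟩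
    obtain ⟨j, u, -, -, hu⟩ := key m
    rw [SetLike.mem_coe, Subalgebra.mem_toSubmodule, hb, hu]
    exact mul_mem (Subalgebra.algebraMap_mem _ _)
      (pow_mem (Algebra.self_mem_adjoin_singleton A₀ (e d)) j)

/-- totally ramified case: if `v (e_d) = 1` then `d` generates `M`,
every `m` equals `v (eₘ) • d`, each `eₘ` is a unit of `A₀` times `e_d ^ v (eₘ)`,
and `e_d` generates `A` as an `A₀`-algebra. -/
theorem stmt5 {A₀ A : Type*} [CommRing A₀] [CommRing A] [IsDomain A]
    [IsDiscreteValuationRing A] [Algebra A₀ A]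
    {M : Type*} [AddCommGroup M] [Fintype M]
    {p k : ℕ} [Fact p.Prime] [CharP A p]
    (hcard : Fintype.card M = p ^ k)
    (e : M → A) (α : M → M → A₀)
    (b : Module.Basis M A₀ A) (hb : ∀ m, b m = e m) (he0 : e 0 = 1)
    (hmul : ∀ m n, e m * e n = algebraMap A₀ A (α m n) * e (m + n))
    (hreg : ∀ m n, α m n ∈ nonZeroDivisors A₀)
    (hN : ∀ n, IsUnit (e n) → n = 0)
    (d : M) (hd : IsDiscreteValuationRing.addVal A (e d) = 1) :
    AddSubgroup.zmultiples d = ⊤ ∧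
      (∀ m, ∃ (j : ℕ) (u : A₀ˣ),
        IsDiscreteValuationRing.addVal A (e m) = j ∧ m = j • d ∧
          e m = algebraMap A₀ A u * e d ^ j) ∧
      Algebra.adjoin A₀ {e d} = ⊤ :=
  stmt5_general e α b hb he0 hmul hreg hN d hd
end

section
/- Let $A_0$ be a commutative ring, $q = p^n$ a prime power, and $(\alpha_{i,j})_{i,j \in \mathbb{Z}/q\mathbb{Z}}$ a symmetric 2-cocycle with values in non-zero-divisors of $A_0$, normalized by $\alpha_{0,j} = \alpha_{i,0} = 1$. Set $\beta_0 = 1$, $\beta_{i+1} = \alpha_{1,1}\alpha_{2,1}\cdots\alpha_{i,1}$ for $0 \le s(i) \le q-2$, and $f = \prod_{l \in \mathbb{Z}/q\mathbb{Z}} \alpha_{l,1}$. Then for all $i,j \in \mathbb{Z}/q\mathbb{Z}$ one has (in the total fraction ring) $\alpha_{i,j} = \beta_{i+j}\,\beta_i^{-1}\beta_j^{-1}\, f^{\sigma(i,j)}$, where $\sigma(i,j) = \frac{1}{q}(s(i)+s(j)-s(i+j))$. Thus the whole cocycle is determined by the values $\alpha_{i,1}$. -/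
/-- a normalized symmetric 2-cocycle `α` of `ℤ/qℤ` (`q = pⁿ`) with values
in non-zero-divisors of `A₀` is determined by the values `α i 1`: setting
`β_i = α 1 1 ⋯ α (i-1) 1` and `f = ∏ l, α l 1`, one has
`α i j · βᵢ · βⱼ = β_{i+j} · f^{σ(i,j)}` (the identity `α i j = β_{i+j} βᵢ⁻¹ βⱼ⁻¹ f^{σ(i,j)}`
in the total fraction ring, cleared of denominators). -/
theorem stmt8 {A₀ : Type*} [CommRing A₀] {p n : ℕ} (hp : p.Prime)
    (q : ℕ) (hq : q = p ^ n) [NeZero q]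
    (α : ZMod q → ZMod q → A₀)
    (hreg : ∀ i j, α i j ∈ nonZeroDivisors A₀)
    (hnorm : ∀ j, α 0 j = 1) (hnorm' : ∀ i, α i 0 = 1)
    (hsymm : ∀ i j, α i j = α j i)
    (hcoc : ∀ i j k, α i j * α (i + j) k = α j k * α i (j + k))
    (β : ZMod q → A₀)
    (hβ : ∀ i, β i = ∏ t ∈ Finset.range (ZMod.val i), α (t : ZMod q) 1)
    (f : A₀) (hf : f = ∏ l : ZMod q, α l 1) :
    ∀ i j, α i j * β i * β j =
      β (i + j) * f ^ ((ZMod.val i + ZMod.val j - ZMod.val (i + j)) / q) := by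
  have hq0 : 0 < q := Nat.pos_of_ne_zero (NeZero.ne q)
  have hcastval : ∀ a : ZMod q, ((ZMod.val a : ℕ) : ZMod q) = a := fun a =>
    ZMod.natCast_rightInverse a
  have hfr : f = ∏ t ∈ Finset.range q, α (t : ZMod q) 1 := by
    rw [hf]
    refine Finset.prod_nbij' (fun l => ZMod.val l) (fun t => (t : ZMod q)) ?_ ?_ ?_ ?_ ?_
    · intro a _; exact Finset.mem_range.2 (ZMod.val_lt a)
    · intro a _; exact Finset.mem_univ _
    · intro a _; exact hcastval a
    · intro a ha; exact ZMod.val_cast_of_lt (Finset.mem_range.1 ha)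
    · intro a _; rw [hcastval a]
  suffices H : ∀ m : ℕ, m < q → ∀ i : ZMod q,
      α i (m : ZMod q) * β i * β (m : ZMod q) =
        β (i + (m : ZMod q)) *
          f ^ ((ZMod.val i + m - ZMod.val (i + (m : ZMod q))) / q) by
    intro i j
    have := H (ZMod.val j) (ZMod.val_lt j) i
    rwa [hcastval j] at this
  intro m
  induction m with
  | zero =>
    intro _ i
    simp [hnorm', hβ]
  | succ m ih =>
    intro hm i
    have hmq : m < q := Nat.lt_of_succ_lt hm
    have hval' : (↑m : ZMod q).val = m := ZMod.val_cast_of_lt hmq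
    have hvalj : ((↑(m + 1) : ZMod q)).val = m + 1 := ZMod.val_cast_of_lt hm
    have hcast : ((m + 1 : ℕ) : ZMod q) = (m : ZMod q) + 1 := by push_cast; ring
    have hβstep : β ((m : ZMod q) + 1) = β (m : ZMod q) * α (m : ZMod q) 1 := by
      rw [hβ, hβ, ← hcast, hvalj, Finset.prod_range_succ, hval']
    have hc := hcoc i (m : ZMod q) 1
    have ih' := ih hmq i
    set k := (i + (m : ZMod q)).val with hk
    have hkq : k < q := ZMod.val_lt _
    have hk_le : k ≤ ZMod.val i + m := by
      have := ZMod.val_add_le i (m : ZMod q)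
      rw [hval'] at this; exact this
    have hkcast : ((k : ℕ) : ZMod q) = i + (m : ZMod q) := hcastval _
    rw [hcast]
    rcases Nat.lt_or_ge k (q - 1) with hlt | hge
    · -- no wrap-around
      have h1 : i + ((m : ZMod q) + 1) = ((k + 1 : ℕ) : ZMod q) := by
        rw [← add_assoc, ← hkcast]; push_cast; ring
      have hval2 : (i + ((m : ZMod q) + 1)).val = k + 1 := by
        rw [h1, ZMod.val_cast_of_lt (by omega)]
      have hβstep2 : β (i + ((m : ZMod q) + 1)) = β (i + (m : ZMod q)) * α (i + (m : ZMod q)) 1 := by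
        rw [hβ, hβ, hval2, Finset.prod_range_succ, ← hk, hkcast]
      have hexp : (ZMod.val i + (m + 1) - (i + ((m : ZMod q) + 1)).val) / q
          = (ZMod.val i + m - k) / q := by
        rw [hval2]; congr 1; omega
      rw [hexp, hβstep, hβstep2]
      linear_combination α (i + (m : ZMod q)) 1 * ih' - (β i * β (m : ZMod q)) * hc
    · -- wrap-around: k = q - 1
      have hkeq : k = q - 1 := by omega
      have h0 : i + ((m : ZMod q) + 1) = 0 := by
        rw [← add_assoc, ← hkcast, hkeq]
        push_cast
        rw [show ((q - 1 : ℕ) : ZMod q) + 1 = ((q - 1 + 1 : ℕ) : ZMod q) by push_cast; ring]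
        rw [Nat.sub_add_cancel hq0, ZMod.natCast_self]
      have hβ0 : β (i + ((m : ZMod q) + 1)) = 1 := by
        rw [h0, hβ, ZMod.val_zero, Finset.prod_range_zero]
      have hfstep : β (i + (m : ZMod q)) * α (i + (m : ZMod q)) 1 = f := by
        rw [hβ, ← hk, hkeq, hfr, ← hkcast, hkeq]
        rw [← Finset.prod_range_succ (fun t => α (t : ZMod q) 1) (q - 1),
          Nat.sub_add_cancel hq0]
      have hval0 : (i + ((m : ZMod q) + 1)).val = 0 := by rw [h0, ZMod.val_zero]
      have hexp : (ZMod.val i + (m + 1) - (i + ((m : ZMod q) + 1)).val) / q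
          = (ZMod.val i + m - k) / q + 1 := by
        rw [hval0, Nat.sub_zero,
          Nat.div_eq_sub_div hq0 (by omega)]
        congr 2; omega
      rw [hexp, hβstep, hβ0, pow_succ]
      linear_combination α (i + (m : ZMod q)) 1 * ih' - (β i * β (m : ZMod q)) * hc +
        f ^ ((ZMod.val i + m - k) / q) * hfstep
end

section
/- Let $k$ be a field of characteristic $p > 0$ and consider the action of $\alpha_p = \mathrm{Spec}(k[t]/t^p)$ on $\mathbb{A}^1_k = \mathrm{Spec}(k[y])$ given by $y \mapsto y/(1+ty) = y\sum_{i=0}^{p-1}(-1)^i t^i y^i$. Then the stabilizer has coordinate ring $k[y,t]/(t^p, t y^2)$, its augmentation ideal is isomorphic as a $k[y]$-module to $(k[y]/(y^2))^{\oplus(p-1)}$, and the associated divisor is $2(p-1)[0]$. -/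
/-!
Write `t = X` and `y = C X`, so that the action is `y ↦ y/(1 + ty) = ∑_{i<p} (-1)ⁱ tⁱ yⁱ⁺¹`.
The ideal of the stabilizer is generated by the differences `a(y/(1 + ty)) - a(y)`, hence by the
single element `y/(1 + ty) - y`. Modulo `tᵖ` the element `1 + ty` is a unit and
`(y/(1 + ty) - y)(1 + ty) = -ty² - (-ty)ᵖ y = -ty²`, so that ideal is `(ty²)`.
In `k[y][t]/(tᵖ, ty²)` the ideal `(t)` is spanned over `k[y]` by `t, …, tᵖ⁻¹`, and the kernel of
`c ↦ ∑ cᵢ tⁱ⁺¹` consists of the `c` with all `cᵢ ∈ (y²)`: a coefficient of `u tᵖ + v ty²` in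
degree `0 < j < p` is a multiple of `y²`. The presentation `y² · id` has determinant `y^{2(p-1)}`.
-/

/-- Instance search does not find the quotient ring structure on `k[X][X] ⧸ Jp` by itself. -/
noncomputable instance stmt15PolyQuotCommRing (R : Type*) [CommRing R] (I : Ideal (Polynomial R)) :
    CommRing (Polynomial R ⧸ I) :=
  Ideal.Quotient.commRing I

open Polynomial

section Stabilizer

variable {A : Type*} [CommRing A]

theorem sum_neg_one_pow_mul_pow_mul_one_add (t y : A) (n : ℕ) :
    (∑ i ∈ Finset.range n, (-1 : A) ^ i * (t ^ i * y ^ (i + 1))) * (1 + t * y)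
      = y - (-(t * y)) ^ n * y := by
  have hgeom : ∑ i ∈ Finset.range n, (-1 : A) ^ i * (t ^ i * y ^ (i + 1))
      = y * ∑ i ∈ Finset.range n, (-(t * y)) ^ i := by
    rw [Finset.mul_sum]
    exact Finset.sum_congr rfl fun i _ => by ring
  calc _ = y * ((1 - -(t * y)) * ∑ i ∈ Finset.range n, (-(t * y)) ^ i) := by rw [hgeom]; ring
    _ = _ := by rw [mul_neg_geom_sum]; ring

theorem span_singleton_sum_neg_one_pow_sub {t : A} {n : ℕ} (ht : t ^ n = 0) (y : A) :
    Ideal.span {(∑ i ∈ Finset.range n, (-1 : A) ^ i * (t ^ i * y ^ (i + 1))) - y}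
      = Ideal.span {t * y ^ 2} := by
  have hunit : IsUnit (1 + t * y) :=
    ((Commute.all t y).isNilpotent_mul_right ⟨n, ht⟩).isUnit_one_add
  have hmul : ((∑ i ∈ Finset.range n, (-1 : A) ^ i * (t ^ i * y ^ (i + 1))) - y) * (1 + t * y)
      = -(t * y ^ 2) := by
    rw [sub_mul, sum_neg_one_pow_mul_pow_mul_one_add, neg_pow, mul_pow, ht]
    ring
  rw [← Ideal.span_singleton_mul_right_unit hunit, hmul, Ideal.span_singleton_neg]

end Stabilizer

theorem Ideal.span_aeval_sub_algebraMap {R B : Type*} [CommRing R] [CommRing B] [Algebra R B]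
    [Algebra R[X] B] [IsScalarTower R R[X] B] (ξ : B) :
    Ideal.span {x | ∃ a : R[X], x = aeval ξ a - algebraMap R[X] B a}
      = Ideal.span {ξ - algebraMap R[X] B X} := by
  apply le_antisymm
  · rw [Ideal.span_le]
    rintro _ ⟨a, rfl⟩
    have ha : algebraMap R[X] B a = aeval (algebraMap R[X] B X) a := by
      rw [aeval_algebraMap_apply, aeval_X_left_apply]
    rw [SetLike.mem_coe, Ideal.mem_span_singleton, ha, aeval_def, aeval_def, ← eval_map,
      ← eval_map]
    exact sub_dvd_eval_sub _ _ _
  · rw [Ideal.span_le, Set.singleton_subset_iff]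
    exact Ideal.subset_span ⟨X, by rw [aeval_X]⟩

theorem DoubleQuot.exists_quotQuotEquiv_of_eq_map {A : Type*} [CommRing A] {I J L : Ideal A}
    {K : Ideal (A ⧸ I)} (hK : K = J.map (Ideal.Quotient.mk I)) (hL : I ⊔ J = L) :
    ∃ e : (A ⧸ I) ⧸ K ≃+* A ⧸ L, ∀ f : A,
      e (Ideal.Quotient.mk K (Ideal.Quotient.mk I f)) = Ideal.Quotient.mk L f := by
  subst hK hL
  exact ⟨DoubleQuot.quotQuotEquivQuotSup I J, DoubleQuot.quotQuotEquivQuotSup_quotQuotMk I J⟩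

namespace Polynomial

section AugmentationIdeal

variable {R : Type*} [CommRing R]

theorem smul_mk_eq_mk_C_mul (I : Ideal R[X]) (r : R) (g : R[X]) :
    r • Ideal.Quotient.mk I g = Ideal.Quotient.mk I (C r * g) := by
  rw [← smul_eq_C_mul]
  exact (Submodule.Quotient.mk_smul _ _ _).symm

variable (a : R) (n : ℕ)

local notation "𝒯" => (Ideal.span {X ^ n, X * C a} : Ideal R[X])

theorem dvd_coeff_of_mem_span_X_pow_X_mul_C {g : R[X]} (hg : g ∈ 𝒯) {i : ℕ} (hi : i + 1 < n) :
    a ∣ g.coeff (i + 1) := by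
  obtain ⟨u, v, rfl⟩ := Ideal.mem_span_pair.mp hg
  rw [coeff_add, coeff_mul_X_pow', if_neg hi.not_ge, zero_add, ← mul_assoc, coeff_mul_C,
    coeff_mul_X]
  exact dvd_mul_left _ _

theorem mk_X_pow_eq_zero {m : ℕ} (hm : n ≤ m) : Ideal.Quotient.mk 𝒯 (X ^ m) = 0 := by
  rw [Ideal.Quotient.eq_zero_iff_mem, ← Nat.add_sub_cancel' hm, pow_add]
  exact Ideal.mul_mem_right _ _ (Ideal.subset_span (Set.mem_insert _ _))

noncomputable def sumCoeffXPowSucc : (Fin (n - 1) → R) →ₗ[R] R[X] ⧸ 𝒯 :=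
  Fintype.linearCombination R fun i => Ideal.Quotient.mk _ (X ^ ((i : ℕ) + 1))

theorem sumCoeffXPowSucc_apply (c : Fin (n - 1) → R) :
    sumCoeffXPowSucc a n c = Ideal.Quotient.mk 𝒯 (∑ i, C (c i) * X ^ ((i : ℕ) + 1)) := by
  rw [sumCoeffXPowSucc, Fintype.linearCombination_apply, map_sum]
  exact Finset.sum_congr rfl fun i _ => smul_mk_eq_mk_C_mul _ _ _

theorem range_sumCoeffXPowSucc :
    LinearMap.range (sumCoeffXPowSucc a n)
      = (Ideal.span {Ideal.Quotient.mk 𝒯 X}).restrictScalars R := by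
  rw [sumCoeffXPowSucc, Fintype.range_linearCombination]
  apply le_antisymm
  · rw [Submodule.span_le]
    rintro _ ⟨i, rfl⟩
    rw [SetLike.mem_coe, Submodule.restrictScalars_mem, Ideal.mem_span_singleton]
    exact ⟨Ideal.Quotient.mk _ (X ^ (i : ℕ)), by rw [← map_mul, ← pow_succ']⟩
  · intro x hx
    obtain ⟨c, rfl⟩ := Ideal.mem_span_singleton'.mp hx
    obtain ⟨g, rfl⟩ := Ideal.Quotient.mk_surjective c
    rw [← map_mul]
    clear hx
    induction g using Polynomial.induction_on' with
    | add f g hf hg => rw [add_mul, map_add]; exact add_mem hf hg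
    | monomial i r =>
      rw [← C_mul_X_pow_eq_monomial, mul_assoc, ← pow_succ, ← smul_mk_eq_mk_C_mul]
      by_cases hi : i < n - 1
      · exact Submodule.smul_mem _ _ (Submodule.subset_span ⟨⟨i, hi⟩, rfl⟩)
      · rw [mk_X_pow_eq_zero a n (by omega), smul_zero]
        exact zero_mem _

theorem ker_sumCoeffXPowSucc :
    LinearMap.ker (sumCoeffXPowSucc a n) = Submodule.pi Set.univ fun _ => Ideal.span {a} := by
  ext c
  rw [LinearMap.mem_ker, Submodule.mem_pi, sumCoeffXPowSucc_apply, Ideal.Quotient.eq_zero_iff_mem]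
  have hcoeff (i : Fin (n - 1)) :
      (∑ j : Fin (n - 1), C (c j) * X ^ ((j : ℕ) + 1)).coeff ((i : ℕ) + 1) = c i := by
    simp_rw [finsetSum_coeff, coeff_C_mul_X_pow, add_left_inj, Fin.val_inj]
    simp
  constructor
  · intro hmem i _
    rw [Ideal.mem_span_singleton, ← hcoeff i]
    exact dvd_coeff_of_mem_span_X_pow_X_mul_C a n hmem (by omega)
  · intro hc
    refine sum_mem fun i _ => ?_
    obtain ⟨d, hd⟩ := Ideal.mem_span_singleton.mp (hc i (Set.mem_univ i))
    rw [hd, C_mul, pow_succ']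
    have hfactor : C a * C d * (X * X ^ (i : ℕ)) = (X * C a) * (C d * X ^ (i : ℕ)) := by ring
    rw [hfactor]
    exact Ideal.mul_mem_right _ _ (Ideal.subset_span (Set.mem_insert_of_mem _ rfl))

theorem nonempty_span_mk_X_linearEquiv :
    Nonempty ((Ideal.span {Ideal.Quotient.mk 𝒯 X}).restrictScalars R
      ≃ₗ[R] (Fin (n - 1) → R ⧸ Ideal.span {a})) := by
  classical
  exact ⟨(LinearEquiv.ofEq _ _ (range_sumCoeffXPowSucc a n).symm).trans <|
    (LinearMap.quotKerEquivRange _).symm.trans <|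
      (Submodule.quotEquivOfEq _ _ (ker_sumCoeffXPowSucc a n)).trans (Submodule.quotientPi _)⟩

end AugmentationIdeal

end Polynomial

open Polynomial in
theorem stmt15_general {k : Type*} [Field k] {p : ℕ}
    (Jp : Ideal (Polynomial (Polynomial k))) (hJp : Jp = Ideal.span {X ^ p})
    (ξ : Polynomial (Polynomial k) ⧸ Jp)
    (hξ : ξ = Ideal.Quotient.mk Jp
      (∑ i ∈ Finset.range p, (-1 : Polynomial (Polynomial k)) ^ i * (X ^ i * C (X ^ (i + 1)))))
    (J' : Ideal (Polynomial (Polynomial k) ⧸ Jp))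
    (hJ' : J' = Ideal.span {x | ∃ a : Polynomial k,
      x = Polynomial.aeval (R := k) ξ a - algebraMap (Polynomial k) _ a})
    (T : Ideal (Polynomial (Polynomial k))) (hT : T = Ideal.span {X ^ p, X * C (X ^ 2)})
    (𝔪 : Ideal (Polynomial (Polynomial k) ⧸ T))
    (h𝔪 : 𝔪 = Ideal.span {Ideal.Quotient.mk T X})
    (h : (Fin (p - 1) → Polynomial k) →ₗ[Polynomial k] (Fin (p - 1) → Polynomial k))
    (hh : h = ((X : Polynomial k) ^ 2) • LinearMap.id) :
    (∃ e : ((Polynomial (Polynomial k) ⧸ Jp) ⧸ J') ≃+* (Polynomial (Polynomial k) ⧸ T),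
      ∀ f : Polynomial (Polynomial k),
        e (Ideal.Quotient.mk J' (Ideal.Quotient.mk Jp f)) = Ideal.Quotient.mk T f) ∧
    Nonempty ((Submodule.restrictScalars (Polynomial k) 𝔪) ≃ₗ[Polynomial k]
        (Fin (p - 1) → Polynomial k ⧸ Ideal.span {(X : Polynomial k) ^ 2})) ∧
    LinearMap.det h = (X : Polynomial k) ^ (2 * (p - 1)) := by
  subst hJp hξ hJ' hT h𝔪 hh
  refine ⟨DoubleQuot.exists_quotQuotEquiv_of_eq_map (J := Ideal.span {X * C (X ^ 2)}) ?_ ?_,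
    nonempty_span_mk_X_linearEquiv _ _, ?_⟩
  · have ht : Ideal.Quotient.mk (Ideal.span {X ^ p}) (X : Polynomial (Polynomial k)) ^ p = 0 := by
      rw [← map_pow, Ideal.Quotient.eq_zero_iff_mem]
      exact Ideal.subset_span rfl
    rw [Ideal.span_aeval_sub_algebraMap, Ideal.map_span, Set.image_singleton, map_mul, C_pow,
      map_pow, ← span_singleton_sum_neg_one_pow_sub ht]
    simp only [map_sum, map_mul, map_pow, map_neg, map_one]
    rfl
  · rw [← Ideal.span_union, Set.singleton_union]
  · rw [LinearMap.det_smul, LinearMap.det_id, Module.finrank_fin_fun, mul_one, ← pow_mul]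

open Polynomial in
/-- for the homographic `α_p`-action on `𝔸¹_k` (char `k = p`) given by
`y ↦ y/(1+ty) = ∑_{i<p} (-1)ⁱ tⁱ y^{i+1}`: the stabilizer has coordinate ring
`k[y][t]/(tᵖ, t y²)`, its augmentation ideal `𝔪 = (t)` satisfies
`𝔪 ≅ (k[y]/(y²))^{⊕(p-1)}` as `k[y]`-modules, and the associated divisor is
`2(p-1)[0]` (the determinant of the presenting map `·y²` is `y^{2(p-1)}`). -/
theorem stmt15 {k : Type*} [Field k] {p : ℕ} (hp : p.Prime) [CharP k p]
    (Jp : Ideal (Polynomial (Polynomial k))) (hJp : Jp = Ideal.span {X ^ p})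
    (ξ : Polynomial (Polynomial k) ⧸ Jp)
    (hξ : ξ = Ideal.Quotient.mk Jp
      (∑ i ∈ Finset.range p, (-1 : Polynomial (Polynomial k)) ^ i * (X ^ i * C (X ^ (i + 1)))))
    (J' : Ideal (Polynomial (Polynomial k) ⧸ Jp))
    (hJ' : J' = Ideal.span {x | ∃ a : Polynomial k,
      x = Polynomial.aeval (R := k) ξ a - algebraMap (Polynomial k) _ a})
    (T : Ideal (Polynomial (Polynomial k))) (hT : T = Ideal.span {X ^ p, X * C (X ^ 2)})
    (𝔪 : Ideal (Polynomial (Polynomial k) ⧸ T))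
    (h𝔪 : 𝔪 = Ideal.span {Ideal.Quotient.mk T X})
    (h : (Fin (p - 1) → Polynomial k) →ₗ[Polynomial k] (Fin (p - 1) → Polynomial k))
    (hh : h = ((X : Polynomial k) ^ 2) • LinearMap.id) :
    (∃ e : ((Polynomial (Polynomial k) ⧸ Jp) ⧸ J') ≃+* (Polynomial (Polynomial k) ⧸ T),
      ∀ f : Polynomial (Polynomial k),
        e (Ideal.Quotient.mk J' (Ideal.Quotient.mk Jp f)) = Ideal.Quotient.mk T f) ∧
    Nonempty ((Submodule.restrictScalars (Polynomial k) 𝔪) ≃ₗ[Polynomial k]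
        (Fin (p - 1) → Polynomial k ⧸ Ideal.span {(X : Polynomial k) ^ 2})) ∧
    LinearMap.det h = (X : Polynomial k) ^ (2 * (p - 1)) :=
  stmt15_general Jp hJp ξ hξ J' hJ' T hT 𝔪 h𝔪 h hh
end

section
/- Let $A_0$ be a commutative local ring, $q = p^n$, and $A = \bigoplus_{i \in \mathbb{Z}/q\mathbb{Z}} A_0 e_i$ the $A_0$-algebra defined by a normalized symmetric cocycle $(\alpha_{ij})$ of non-zero-divisors. For a linear form $\varphi = \sum_m \varphi_m e_m^* \in \mathrm{Hom}_{A_0}(A, A_0)$, the dual module $A^* = \mathrm{Hom}_{A_0}(A,A_0)$ with $A$-action $(a\cdot\theta)(x) = \theta(ax)$ is generated by $\varphi$ if and only if the matrix $M(\varphi) = (\alpha_{ij}\varphi_{i+j})_{i,j}$ is invertible over $A_0$. Moreover $e_i \cdot e_j^* = \alpha_{i, j-i}\, e_{j-i}^*$ for all $i,j$. -/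
/-!
Through the dual basis, `a ↦ φ (a * ·)` has matrix `(φ (e i * e j))ᵢⱼ = M(φ)`, and a linear map
between free modules of the same finite rank over a commutative ring is onto iff its matrix is
invertible.
-/

open Module

section

variable {R M M' ι : Type*} [CommRing R] [AddCommGroup M] [Module R M] [AddCommGroup M']
  [Module R M'] [Fintype ι] [DecidableEq ι]

theorem LinearMap.surjective_iff_isUnit_toMatrix (v : Basis ι R M) (v' : Basis ι R M')
    (f : M →ₗ[R] M') : Function.Surjective f ↔ IsUnit (toMatrix v v' f) := by
  have hf : ⇑f = v'.equivFun.symm ∘ (toMatrix v v' f).mulVec ∘ v.equivFun := by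
    funext x
    simp [LinearMap.toMatrix_mulVec_repr]
  rw [hf, EquivLike.comp_surjective, EquivLike.surjective_comp,
    Matrix.mulVec_surjective_iff_isUnit]

end

section

variable {R A ι : Type*} [CommRing R] [CommRing A] [Algebra R A] [Fintype ι] [DecidableEq ι]

theorem Module.Basis.toMatrix_mul_compr₂_dualBasis (b : Basis ι R A) (φ : Dual R A) :
    LinearMap.toMatrix b b.dualBasis ((LinearMap.mul R A).compr₂ φ) =
      Matrix.of fun i j => φ (b i * b j) := by
  ext i j
  simp [LinearMap.toMatrix_apply, mul_comm]

theorem Module.Basis.forall_exists_eq_mul_iff_isUnit (b : Basis ι R A) (φ : Dual R A) :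
    (∀ θ : Dual R A, ∃ a : A, ∀ x : A, θ x = φ (a * x)) ↔
      IsUnit (Matrix.of fun i j => φ (b i * b j)) := by
  rw [← b.toMatrix_mul_compr₂_dualBasis, ← LinearMap.surjective_iff_isUnit_toMatrix]
  refine forall_congr' fun θ => exists_congr fun a => ?_
  rw [eq_comm, LinearMap.ext_iff]
  simp [eq_comm]

end

theorem Module.Basis.dualBasis_mul_left {R A ι : Type*} [CommRing R] [CommRing A] [Algebra R A]
    [AddCommGroup ι] [Finite ι] [DecidableEq ι] (b : Basis ι R A) (α : ι → ι → R)
    (hmul : ∀ i j, b i * b j = algebraMap R A (α i j) * b (i + j)) (i j : ι) (x : A) :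
    b.dualBasis j (b i * x) = α i (j - i) * b.dualBasis (j - i) x := by
  suffices (b.dualBasis j).comp (LinearMap.mulLeft R (b i)) =
      α i (j - i) • b.dualBasis (j - i) from LinearMap.congr_fun this x
  refine b.ext fun k => ?_
  simp only [LinearMap.comp_apply, LinearMap.mulLeft_apply, LinearMap.smul_apply, smul_eq_mul,
    hmul, ← Algebra.smul_def, map_smul, dualBasis_apply_self]
  by_cases h : k = j - i
  · simp [h]
  · rw [if_neg h, if_neg fun hc => h (by rw [← hc]; abel), mul_zero, mul_zero]

theorem stmt18_general {A₀ A : Type*} [CommRing A₀] [CommRing A] [Algebra A₀ A]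
    (q : ℕ) [NeZero q]
    (e : ZMod q → A) (α : ZMod q → ZMod q → A₀)
    (b : Module.Basis (ZMod q) A₀ A) (hb : ∀ i, b i = e i)
    (hmul : ∀ i j, e i * e j = algebraMap A₀ A (α i j) * e (i + j)) :
    (∀ (i j : ZMod q) (x : A),
      b.dualBasis j (e i * x) = α i (j - i) * b.dualBasis (j - i) x) ∧
    (∀ φ : Module.Dual A₀ A,
      (∀ θ : Module.Dual A₀ A, ∃ a : A, ∀ x : A, θ x = φ (a * x)) ↔
        IsUnit (Matrix.of fun i j : ZMod q => α i j * φ (e (i + j)))) := by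
  obtain rfl : e = b := funext fun i => (hb i).symm
  refine ⟨b.dualBasis_mul_left α hmul, fun φ => ?_⟩
  simp only [b.forall_exists_eq_mul_iff_isUnit φ, hmul, ← Algebra.smul_def, map_smul, smul_eq_mul]

/-- for the twisted group algebra `A = ⊕_i A₀ e_i` of `ℤ/qℤ` (`q = pⁿ`)
over a local ring `A₀`, with dual basis `(e_i^*)` of `A* = Hom_{A₀}(A, A₀)` and the
`A`-action `(a·θ)(x) = θ(ax)`: one has `e_i · e_j^* = α_{i,j-i} e_{j-i}^*`, and a
linear form `φ` generates `A*` as an `A`-module iff the matrix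
`M(φ) = (α_{ij} φ_{i+j})` is invertible over `A₀`. -/
theorem stmt18 {A₀ A : Type*} [CommRing A₀] [IsLocalRing A₀] [CommRing A] [Algebra A₀ A]
    {p n : ℕ} (hp : p.Prime) (q : ℕ) (hq : q = p ^ n) [NeZero q]
    (e : ZMod q → A) (α : ZMod q → ZMod q → A₀)
    (b : Module.Basis (ZMod q) A₀ A) (hb : ∀ i, b i = e i) (he0 : e 0 = 1)
    (hmul : ∀ i j, e i * e j = algebraMap A₀ A (α i j) * e (i + j))
    (hreg : ∀ i j, α i j ∈ nonZeroDivisors A₀)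
    (hnorm : ∀ j, α 0 j = 1)
    (hsymm : ∀ i j, α i j = α j i)
    (hcoc : ∀ i j l, α i j * α (i + j) l = α j l * α i (j + l)) :
    (∀ (i j : ZMod q) (x : A),
      b.dualBasis j (e i * x) = α i (j - i) * b.dualBasis (j - i) x) ∧
    (∀ φ : Module.Dual A₀ A,
      (∀ θ : Module.Dual A₀ A, ∃ a : A, ∀ x : A, θ x = φ (a * x)) ↔
        IsUnit (Matrix.of fun i j : ZMod q => α i j * φ (e (i + j)))) :=
  stmt18_general q e α b hb hmul
end

section
/- Let $A$ and $B$ be discrete valuation rings of characteristic $p$, with $B \subseteq A$ the invariant subring for a totally ramified $\mathbb{Z}/p^m\mathbb{Z}$-grading of $A$ (so that the degree-zero part of the grading of $A$ of type $\mathbb{Z}/p^n\mathbb{Z}$, restricted along the subgroup, is $B$, and $A$ is free of rank $p^m$ over $B$ with the image $g^\sharp(\pi')$ of a uniformizer $\pi'$ of $B$ lying in the graded piece of degree $p^m$). Then $v_A(g^\sharp(\pi')) = p^m$, where $v_A$ is the valuation of $A$. Consequently, with $\mathfrak{m}_G$, $\mathfrak{m}_H$, $g^*\mathfrak{m}_{G/H}$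 the augmentation modules of the respective stabilizers, $\ell_A(\mathfrak{m}_G) = p^n - 1 = (p^m - 1) + p^m(p^{n-m} - 1) = \ell_A(\mathfrak{m}_H) + \ell_A(g^*\mathfrak{m}_{G/H})$, which is the local multiplicity identity $\mathrm{R}_G = \mathrm{R}_H + g^*\mathrm{R}_{G/H}$. -/
/-!
Write `e = v_A(π')`. Since `π' = c π^{pᵐ}`, `e ≥ pᵐ`. Conversely `A/π'A` has length `e` over `A`
and length `[A : B] = pᵐ` over `B` (it is free of rank `pᵐ` over the field `B/π'`), and lengths
along the local extension `B → A` multiply by the residue degree `f ≥ 1`, so `e f = pᵐ` and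
`e ≤ pᵐ`. The lengths of the augmentation modules are then `k · v(x)` for `(A/x)^k`.
-/

open IsLocalRing Module
open IsDiscreteValuationRing (addVal addVal_mul addVal_uniformizer)

theorem Module.exists_compositionSeries_of_length_eq {R M : Type*} [Ring R] [AddCommGroup M]
    [Module R M] {n : ℕ} (h : length R M = n) :
    ∃ s : CompositionSeries (Submodule R M), s.head = ⊥ ∧ s.last = ⊤ ∧ s.length = n := by
  obtain ⟨s, hs₁, hs₂⟩ := isFiniteLength_iff_exists_compositionSeries.mp
    (length_ne_top_iff.mp (h ▸ ENat.natCast_ne_top n))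
  exact ⟨s, hs₁, hs₂, by exact_mod_cast (length_compositionSeries s hs₁ hs₂).trans h⟩

theorem Ring.exists_compositionSeries_pi_quotient_span {R : Type*} [CommRing R] {x : R} {e : ℕ}
    (hx : Ring.ord R x = e) (k : ℕ) :
    ∃ s : CompositionSeries (Submodule R (Fin k → R ⧸ Ideal.span {x})),
      s.head = ⊥ ∧ s.last = ⊤ ∧ s.length = k * e :=
  exists_compositionSeries_of_length_eq <| by
    rw [length_pi, ENat.card_eq_coe_fintype_card, Fintype.card_fin, ← Ring.ord, hx, Nat.cast_mul]

theorem Nat.pow_sub_one_eq_add_mul {a m n : ℕ} (ha : 0 < a) (hmn : m ≤ n) :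
    a ^ n - 1 = (a ^ m - 1) + a ^ m * (a ^ (n - m) - 1) := by
  obtain ⟨k, rfl⟩ := Nat.exists_eq_add_of_le hmn
  have hX := Nat.one_le_pow m a ha
  have hXY := Nat.le_mul_of_pos_right (a ^ m) (Nat.one_le_pow k a ha)
  rw [Nat.add_sub_cancel_left, pow_add, Nat.mul_sub, mul_one]
  omega

section Ramification

variable {B A : Type*} [CommRing B] [IsDomain B] [IsDiscreteValuationRing B]
  [CommRing A] [IsDomain A] [IsDiscreteValuationRing A]
  [Algebra B A] [Module.Free B A] [Module.Finite B A]

theorem addVal_algebraMap_mul_length_residueField_eq_finrank {π' : B} (hπ' : Irreducible π') :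
    addVal A (algebraMap B A π') * length (ResidueField B) (ResidueField A) = finrank B A := by
  have hA : length A (A ⧸ (maximalIdeal B).map (algebraMap B A)) =
      addVal A (algebraMap B A π') := by
    rw [← Ring.ord_eq_addVal, Ring.ord, hπ'.maximalIdeal_eq, Ideal.map_span, Set.image_singleton]
  let := Ideal.Quotient.field (maximalIdeal B)
  have hB : length B (A ⧸ (maximalIdeal B).map (algebraMap B A)) = finrank B A := by
    rw [length_eq_of_surjective (R := B ⧸ maximalIdeal B) Ideal.Quotient.mk_surjective,
      length_eq_finrank, finrank_quotient_map]
  rw [← hA, ← hB, length_restrictScalars B A]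

theorem addVal_algebraMap_le_finrank {π' : B} (hπ' : Irreducible π') :
    addVal A (algebraMap B A π') ≤ finrank B A :=
  calc addVal A (algebraMap B A π')
      ≤ addVal A (algebraMap B A π') * length (ResidueField B) (ResidueField A) :=
        ENat.self_le_mul_right _ length_pos.ne'
    _ = finrank B A := addVal_algebraMap_mul_length_residueField_eq_finrank hπ'

end Ramification

theorem stmt19_general {A₀ B A : Type*} [CommRing A₀]
    [CommRing B] [IsDomain B] [IsDiscreteValuationRing B]
    [CommRing A] [IsDomain A] [IsDiscreteValuationRing A]
    {p : ℕ} (hp : p.Prime)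
    [Algebra A₀ A] [Algebra B A] {m n : ℕ} (hmn : m ≤ n)
    (bB : Module.Basis (Fin (p ^ m)) B A)
    (π : A) (hπ : Irreducible π)
    (π' : B) (hπ' : Irreducible π')
    (c : A₀) (hc : algebraMap B A π' = algebraMap A₀ A c * π ^ p ^ m) :
    IsDiscreteValuationRing.addVal A (algebraMap B A π') = (p ^ m : ℕ) ∧
    (∃ s : CompositionSeries (Submodule A (Fin (p ^ n - 1) → A ⧸ Ideal.span {π})),
      s.head = ⊥ ∧ s.last = ⊤ ∧ s.length = p ^ n - 1) ∧
    (∃ s : CompositionSeries (Submodule A (Fin (p ^ m - 1) → A ⧸ Ideal.span {π})),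
      s.head = ⊥ ∧ s.last = ⊤ ∧ s.length = p ^ m - 1) ∧
    (∃ s : CompositionSeries (Submodule A
        (Fin (p ^ (n - m) - 1) → A ⧸ Ideal.span {algebraMap B A π'})),
      s.head = ⊥ ∧ s.last = ⊤ ∧ s.length = p ^ m * (p ^ (n - m) - 1)) ∧
    p ^ n - 1 = (p ^ m - 1) + p ^ m * (p ^ (n - m) - 1) := by
  have := Module.Free.of_basis bB
  have := Module.Finite.of_basis bB
  have hv : addVal A (algebraMap B A π') = (p ^ m : ℕ) := by
    refine le_antisymm ?_ ?_
    · simpa [finrank_eq_card_basis bB] using addVal_algebraMap_le_finrank (A := A) hπ'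
    · rw [hc, addVal_mul, hπ.addVal_pow]
      exact le_add_self
  have hordπ : Ring.ord A π = (1 : ℕ) := by
    rw [Ring.ord_eq_addVal, addVal_uniformizer hπ, Nat.cast_one]
  have hordπ' : Ring.ord A (algebraMap B A π') = (p ^ m : ℕ) := by rw [Ring.ord_eq_addVal, hv]
  refine ⟨hv, ?_, ?_, ?_, Nat.pow_sub_one_eq_add_mul hp.pos hmn⟩
  · simpa using Ring.exists_compositionSeries_pi_quotient_span hordπ (p ^ n - 1)
  · simpa using Ring.exists_compositionSeries_pi_quotient_span hordπ (p ^ m - 1)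
  · simpa [mul_comm] using Ring.exists_compositionSeries_pi_quotient_span hordπ' (p ^ (n - m) - 1)

/-- dévissage of a totally ramified `μ_{pⁿ}`-covering at a
codimension-1 point: `A` a DVR of characteristic `p` with grading
`A = ⊕_{i ∈ ℤ/pⁿℤ} A₀ πⁱ` (`π` a uniformizer), `B ⊆ A` the invariant DVR for the
subgroup `μ_{pᵐ}` with `A` free of rank `pᵐ` over `B` and the image of a uniformizer
`π'` of `B` lying in the graded piece `A₀ π^{pᵐ}`. Then `v_A(π') = pᵐ`, and the
lengths of the augmentation modules `𝔪_G ≅ (A/π)^{pⁿ-1}`, `𝔪_H ≅ (A/π)^{pᵐ-1}`,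
`g^*𝔪_{G/H} ≅ (A/π')^{p^{n-m}-1}` satisfy
`ℓ(𝔪_G) = pⁿ - 1 = (pᵐ - 1) + pᵐ(p^{n-m} - 1) = ℓ(𝔪_H) + ℓ(g^*𝔪_{G/H})`,
the local identity `R_G = R_H + g^* R_{G/H}`. -/
theorem stmt19 {A₀ B A : Type*} [CommRing A₀]
    [CommRing B] [IsDomain B] [IsDiscreteValuationRing B]
    [CommRing A] [IsDomain A] [IsDiscreteValuationRing A]
    {p : ℕ} (hp : p.Prime) [CharP A p] [CharP B p]
    [Algebra A₀ A] [Algebra B A] {m n : ℕ} (hmn : m ≤ n)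
    (bB : Module.Basis (Fin (p ^ m)) B A)
    (π : A) (hπ : Irreducible π)
    (bA : Module.Basis (ZMod (p ^ n)) A₀ A) (hbA : ∀ i, bA i = π ^ (ZMod.val i))
    (π' : B) (hπ' : Irreducible π')
    (c : A₀) (hc : algebraMap B A π' = algebraMap A₀ A c * π ^ p ^ m) :
    IsDiscreteValuationRing.addVal A (algebraMap B A π') = (p ^ m : ℕ) ∧
    (∃ s : CompositionSeries (Submodule A (Fin (p ^ n - 1) → A ⧸ Ideal.span {π})),
      s.head = ⊥ ∧ s.last = ⊤ ∧ s.length = p ^ n - 1) ∧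
    (∃ s : CompositionSeries (Submodule A (Fin (p ^ m - 1) → A ⧸ Ideal.span {π})),
      s.head = ⊥ ∧ s.last = ⊤ ∧ s.length = p ^ m - 1) ∧
    (∃ s : CompositionSeries (Submodule A
        (Fin (p ^ (n - m) - 1) → A ⧸ Ideal.span {algebraMap B A π'})),
      s.head = ⊥ ∧ s.last = ⊤ ∧ s.length = p ^ m * (p ^ (n - m) - 1)) ∧
    p ^ n - 1 = (p ^ m - 1) + p ^ m * (p ^ (n - m) - 1) :=
  stmt19_general hp hmn bB π hπ π' hπ' c hc
end
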